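/- For any fixed stack configuration ω, the set of maximal popping sequences for ω is exactly one equivalence class under the relation generated by transposing consecutive entries (v_i, v_{i+1}) that are not neighbors in G. -/

import Mathlib

open MeasureTheory ProbabilityTheory
open scoped ENNReal

namespace SinkPopping

variable {V E : Type} [Fintype V] [Fintype E] [DecidableEq V] [DecidableEq E]

/-- The orientations of the edge `e`: pairs `p = (tail, head)` whose unordered pair of
coordinates is the pair of endpoints of `e`.  The edge is oriented as pointing from
`p.1` (its tail) to `p.2` (its head).  A self-loop has exactly one orientation, any
other edge has exactly two. -/
abbrev EdgeOrient (ends : E → Sym2 V) (e : E) : Type :=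
  {p : V × V // ends e = s(p.1, p.2)}

/-- An orientation of the multigraph on vertices `V` with edges `E` whose endpoint map is
`ends` is a choice of orientation for each edge. -/
def Orientation (ends : E → Sym2 V) : Type :=
  ∀ e, EdgeOrient ends e

/-- A vertex is a sink (for the orientation `o`) if it is the tail of no edge. -/
def IsSink (ends : E → Sym2 V) (o : Orientation ends) (v : V) : Prop :=
  ∀ e, ((o e : V × V)).1 ≠ v

/-- A vertex is a source (for the orientation `o`) if it is the head of no edge. -/
def IsSource (ends : E → Sym2 V) (o : Orientation ends) (v : V) : Prop :=
  ∀ e, ((o e : V × V)).2 ≠ v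

/-- A sink-free orientation. -/
def IsSFO (ends : E → Sym2 V) (o : Orientation ends) : Prop :=
  ∀ v, ¬ IsSink ends o v

instance (ends : E → Sym2 V) (o : Orientation ends) (v : V) : Decidable (IsSink ends o v) :=
  inferInstanceAs (Decidable (∀ e, ((o e : V × V)).1 ≠ v))

instance (ends : E → Sym2 V) (o : Orientation ends) : Decidable (IsSFO ends o) :=
  inferInstanceAs (Decidable (∀ v, ¬ IsSink ends o v))

/-- Two vertices are adjacent (neighbors) if some edge has them as its endpoints. -/
def Adj (ends : E → Sym2 V) (a b : V) : Prop :=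
  ∃ e, ends e = s(a, b)

/-- There is at most one self-loop at each vertex (multiple self-loops play no role
in sink-free orientations). -/
def OneLoopPerVertex (ends : E → Sym2 V) : Prop :=
  ∀ e e' : E, (ends e).IsDiag → ends e = ends e' → e = e'

/-- `vs, es` form a cycle of length `n ≥ 1` in the multigraph: distinct vertices
`v_0, …, v_{n-1}`, distinct edges `e_0, …, e_{n-1}`, with `e_i` joining `v_i` to `v_{i+1}`
(indices mod `n`).  A `1`-cycle is a vertex with a self-loop, a `2`-cycle is a pair of
parallel edges. -/
def IsCycleIn (ends : E → Sym2 V) (n : ℕ) (vs : ZMod n → V) (es : ZMod n → E) : Prop :=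
  0 < n ∧ Function.Injective vs ∧ Function.Injective es ∧
    ∀ i, ends (es i) = s(vs i, vs (i + 1))

/-- Reachability: the reflexive-transitive closure of adjacency.  The connected component
of `v` is the set of vertices reachable from `v`. -/
def Reachable (ends : E → Sym2 V) : V → V → Prop :=
  Relation.ReflTransGen (Adj ends)

/-- The connected component of `v` contains a cycle; for a component (which is connected
by definition) this says exactly that the component is not a tree. -/
def ComponentHasCycle (ends : E → Sym2 V) (v : V) : Prop :=
  ∃ (n : ℕ) (vs : ZMod n → V) (es : ZMod n → E),
    IsCycleIn ends n vs es ∧ ∀ i, Reachable ends v (vs i)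

/-- The class `S` of graphs in which no connected component is a tree, i.e. every
connected component contains a cycle. -/
def InS (ends : E → Sym2 V) : Prop :=
  ∀ v : V, ComponentHasCycle ends v

/-- The class `S₀` of graphs in which every vertex lies in some cycle. -/
def InS₀ (ends : E → Sym2 V) : Prop :=
  ∀ v : V, ∃ (n : ℕ) (vs : ZMod n → V) (es : ZMod n → E),
    IsCycleIn ends n vs es ∧ ∃ i, vs i = v

/-- `G` is (isomorphic to) the `n`-cycle:  vertices `v_0, …, v_{n-1}` and for each `i` an
edge joining `v_i` to `v_{i+1}` (indices mod `n`).  The `1`-cycle is a vertex with a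
self-loop. -/
def IsCycleGraph (ends : E → Sym2 V) : Prop :=
  ∃ (n : ℕ) (_ : 0 < n) (fV : V ≃ ZMod n) (fE : E ≃ ZMod n),
    ∀ e, ends e = s(fV.symm (fE e), fV.symm (fE e + 1))

/-- `G` is (isomorphic to) the `n`-lollipop: a path `v_0, …, v_{n-1}` with the `n-1` edges
`v_i v_{i+1}`, together with a self-loop at the end `v_{n-1}`. -/
def IsLollipopGraph (ends : E → Sym2 V) : Prop :=
  ∃ (n : ℕ) (hn : 0 < n) (fV : V ≃ Fin n) (fE : E ≃ Fin n),
    ∀ e, ends e = s(fV.symm (fE e),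
      fV.symm (if h : ((fE e : ℕ) + 1) < n then ⟨(fE e : ℕ) + 1, h⟩ else fE e))

/-- A stack configuration: an infinite stack of orientations of each edge;
`ω e k` is the `k`-th orientation in the stack under the edge `e`. -/
def PopSpace (ends : E → Sym2 V) : Type :=
  ∀ e, ℕ → EdgeOrient ends e

/-- The orientation showing after the vertices in the list `l` have been popped (in order):
the stack of the edge `e` has been advanced once for every entry of `l` incident to `e`. -/
def orientAfter (ends : E → Sym2 V) (ω : PopSpace ends) (l : List V) : Orientation ends :=
  fun e => ω e (l.countP (fun v => decide (v ∈ ends e)))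

/-- `l` is a legal popping sequence for `ω`: each entry is a sink in the orientation
showing after the previous entries have been popped. -/
def IsLegal (ends : E → Sym2 V) (ω : PopSpace ends) (l : List V) : Prop :=
  ∀ (i : ℕ) (h : i < l.length),
    IsSink ends (orientAfter ends ω (l.take i)) (l.get ⟨i, h⟩)

/-- A finite maximal popping sequence: a legal popping sequence that cannot be extended
(equivalently, one that results in a sink-free orientation). -/
def IsMaximal (ends : E → Sym2 V) (ω : PopSpace ends) (l : List V) : Prop :=
  IsLegal ends ω l ∧ ∀ v, ¬ IsLegal ends ω (l ++ [v])

/-- An infinite legal popping sequence (such a sequence is automatically maximal). -/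
def IsLegalInf (ends : E → Sym2 V) (ω : PopSpace ends) (s : ℕ → V) : Prop :=
  ∀ i, IsSink ends (orientAfter ends ω ((List.range i).map s)) (s i)

/-- A choice rule: whenever there is a sink, `C` selects one. -/
def IsChoiceRule (ends : E → Sym2 V) (C : Orientation ends → V) : Prop :=
  ∀ o : Orientation ends, (∃ v, IsSink ends o v) → IsSink ends o (C o)

/-- Sink popping, run with the choice rule `C` on the stacks `ω`: `runPop ends C ω k` is the
list of vertices popped in the first `k` steps (popping stops once the current orientation
is sink-free). -/
def runPop (ends : E → Sym2 V) (C : Orientation ends → V) (ω : PopSpace ends) : ℕ → List V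
  | 0 => []
  | (k + 1) =>
      let l := runPop ends C ω k
      if IsSFO ends (orientAfter ends ω l) then l
      else l ++ [C (orientAfter ends ω l)]

/-- The number of pops made by sink popping before a sink-free orientation is reached
(`⊤` if popping goes on forever). -/
noncomputable def stopTime (ends : E → Sym2 V) (C : Orientation ends → V)
    (ω : PopSpace ends) : ℕ∞ :=
  sInf ((fun m : ℕ => (m : ℕ∞)) ''
    {m | IsSFO ends (orientAfter ends ω (runPop ends C ω m))})

/-- `Q(G, v)`: the number of times the vertex `v` is popped during sink popping. -/
noncomputable def popCount (ends : E → Sym2 V) (C : Orientation ends → V)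
    (ω : PopSpace ends) (v : V) : ℕ∞ :=
  ⨆ k, ((runPop ends C ω k).count v : ℕ∞)

/-- The initial orientation (the top of all the stacks). -/
def initOrient (ends : E → Sym2 V) (ω : PopSpace ends) : Orientation ends :=
  fun e => ω e 0

instance (ends : E → Sym2 V) (e : E) : Nonempty (EdgeOrient ends e) := by
  obtain ⟨a, b, h⟩ : ∃ a b, ends e = s(a, b) :=
    Sym2.ind (fun a b => ⟨a, b, rfl⟩) (ends e)
  exact ⟨⟨(a, b), h⟩⟩

instance (ends : E → Sym2 V) (e : E) : MeasurableSpace (EdgeOrient ends e) := ⊤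

instance (ends : E → Sym2 V) : MeasurableSpace (PopSpace ends) := by
  unfold PopSpace; infer_instance

/-- The stacks `{X_{e,k} = ω e k : e ∈ E, k ≥ 0}` are independent under `P`, and each
`X_{e,k}` is uniformly distributed over the orientations of the edge `e`. -/
def StacksIID (ends : E → Sym2 V) (P : Measure (PopSpace ends)) : Prop :=
  iIndepFun (m := fun p : E × ℕ => (inferInstance : MeasurableSpace (EdgeOrient ends p.1)))
      (fun (p : E × ℕ) (ω : PopSpace ends) => ω p.1 p.2) P
    ∧ ∀ (e : E) (k : ℕ),
        P.map (fun ω : PopSpace ends => ω e k)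
          = (PMF.uniformOfFintype (EdgeOrient ends e)).toMeasure

/-- The number of sink-free orientations of the graph. -/
noncomputable def NumSFO (ends : E → Sym2 V) : ℕ :=
  Nat.card {o : Orientation ends // IsSFO ends o}


/-- `u` is a leaf: a vertex of degree 1, i.e. `u` is incident to exactly one edge,
which is not a self-loop. -/
def IsLeaf (ends : E → Sym2 V) (u : V) : Prop :=
  (∃! e, u ∈ ends e) ∧ ∀ e, u ∈ ends e → ¬ (ends e).IsDiag

/-- A possibly infinite sequence of vertices (a potential popping sequence). -/
inductive PopSeq (V : Type) where
  | fin : List V → PopSeq V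
  | inf : (ℕ → V) → PopSeq V

/-- One transposition of a pair of consecutive entries of a finite sequence which are
not neighbors in the graph. -/
def SwapStep (ends : E → Sym2 V) (l l' : List V) : Prop :=
  ∃ (l₁ : List V) (a b : V) (l₂ : List V),
    ¬ Adj ends a b ∧ l = l₁ ++ a :: b :: l₂ ∧ l' = l₁ ++ b :: a :: l₂

/-- Two finite sequences are equivalent if one can be changed into the other by a
sequence of transpositions of consecutive entries that are not neighbors in `G`. -/
def ListEqv (ends : E → Sym2 V) : List V → List V → Prop :=
  Relation.ReflTransGen (SwapStep ends)

/-- One transposition of a pair of consecutive entries of an infinite sequence which are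
not neighbors in the graph. -/
def InfSwapStep (ends : E → Sym2 V) (s s' : ℕ → V) : Prop :=
  ∃ i, ¬ Adj ends (s i) (s (i + 1)) ∧
    s' = fun j => if j = i then s (i + 1) else if j = i + 1 then s i else s j

/-- An infinite sequence `s` is equivalent to `w` if, by a sequence of such
transpositions, one can transform `s` so that arbitrarily long initial segments of it
match those of `w`. -/
def InfEqv (ends : E → Sym2 V) (s w : ℕ → V) : Prop :=
  ∀ n : ℕ, ∃ t : ℕ → V,
    Relation.ReflTransGen (InfSwapStep ends) s t ∧ ∀ i < n, t i = w i

/-- Equivalence of possibly infinite vertex sequences. -/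
def SeqEqv (ends : E → Sym2 V) : PopSeq V → PopSeq V → Prop
  | .fin l, .fin l' => ListEqv ends l l'
  | .inf s, .inf s' => InfEqv ends s s'
  | _, _ => False

/-- A maximal popping sequence for `ω`: either a finite legal popping sequence that
cannot be extended, or an infinite legal popping sequence. -/
def IsMaximalSeq (ends : E → Sym2 V) (ω : PopSpace ends) : PopSeq V → Prop
  | .fin l => IsMaximal ends ω l
  | .inf s => IsLegalInf ends ω s

/-- The length (total number of pops, possibly `⊤`) of a popping sequence. -/
def seqLength : PopSeq V → ℕ∞
  | .fin l => (l.length : ℕ∞)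
  | .inf _ => ⊤

open scoped Classical in
/-- The number of occurrences of the vertex `v` in a possibly infinite sequence; together
with `seqLength`, this records the multiset of popped vertices. -/
noncomputable def seqCount : PopSeq V → V → ℕ∞
  | .fin l, v => (l.count v : ℕ∞)
  | .inf s, v => if h : {i | s i = v}.Finite then (h.toFinset.card : ℕ∞) else ⊤

/-!
Two sinks are never adjacent, and popping a vertex only advances the stacks under its own
edges. Hence a sink stays a sink until it is popped, nothing adjacent to it is popped
meanwhile, and transposing consecutive non-adjacent entries preserves legality and the
resulting orientation. So the first entry of a legal sequence can be commuted to the front of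
any maximal sequence, and inductively every maximal sequence is equivalent to one that begins
with any given legal sequence. If some maximal sequence is finite, all are finite and equivalent.
Otherwise popping never stops, and a fair infinite legal sequence (one that eventually pops
every vertex that stays a sink) exists; it absorbs every finite legal sequence in the same
way, so every infinite legal sequence is equivalent to it.
-/

theorem exists_forall_exists_ge_eq (α : Type*) [Nonempty α] [Countable α] :
    ∃ σ : ℕ → α, ∀ a k, ∃ n ≥ k, σ n = a := by
  obtain ⟨f, hf⟩ := exists_surjective_nat α
  refine ⟨fun n => f n.unpair.1, fun a k => ?_⟩
  obtain ⟨m, rfl⟩ := hf a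
  exact ⟨Nat.pair m k, Nat.right_le_pair m k, by simp⟩

section

omit [Fintype V] [Fintype E] [DecidableEq V] [DecidableEq E]

variable {ends : E → Sym2 V}

theorem Adj.symm {a b : V} (h : Adj ends a b) : Adj ends b a :=
  let ⟨e, he⟩ := h
  ⟨e, he.trans Sym2.eq_swap⟩

theorem tail_mem_ends (o : Orientation ends) (e : E) : (o e : V × V).1 ∈ ends e := by
  simp [(o e).2]

theorem IsSink.congr {o o' : Orientation ends} {v : V} (hv : IsSink ends o v)
    (h : ∀ e, v ∈ ends e → o' e = o e) : IsSink ends o' v := by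
  intro e he
  by_cases hve : v ∈ ends e
  · exact hv e (h e hve ▸ he)
  · exact hve (he ▸ tail_mem_ends o' e)

theorem IsSink.not_adj {o : Orientation ends} {a b : V} (ha : IsSink ends o a)
    (hb : IsSink ends o b) : ¬ Adj ends a b := by
  rintro ⟨e, he⟩
  have htail : (o e : V × V).1 ∈ s(a, b) := he ▸ tail_mem_ends o e
  rcases Sym2.mem_iff.1 htail with h | h
  exacts [ha e h, hb e h]

theorem SwapStep.perm {l l' : List V} (h : SwapStep ends l l') : l.Perm l' := by
  obtain ⟨l₁, a, b, l₂, -, rfl, rfl⟩ := h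
  exact .append_left l₁ (.swap b a l₂)

theorem ListEqv.perm {l l' : List V} (h : ListEqv ends l l') : l.Perm l' := by
  induction h with
  | refl => rfl
  | tail _ hstep ih => exact ih.trans hstep.perm

theorem ListEqv.cons {l l' : List V} (a : V) (h : ListEqv ends l l') :
    ListEqv ends (a :: l) (a :: l') := by
  induction h with
  | refl => exact .refl
  | tail _ hstep ih =>
    obtain ⟨l₁, x, y, l₂, hxy, rfl, rfl⟩ := hstep
    exact ih.tail ⟨a :: l₁, x, y, l₂, hxy, rfl, rfl⟩

theorem listEqv_append_cons_cons_append {a : V} {l₁ : List V} (l₂ : List V)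
    (h : ∀ w ∈ l₁, ¬ Adj ends w a) : ListEqv ends (l₁ ++ a :: l₂) (a :: (l₁ ++ l₂)) := by
  induction l₁ with
  | nil => exact .refl
  | cons c l₁ ih =>
    refine (ListEqv.cons c (ih fun w hw => h w (.tail c hw))).tail ?_
    exact ⟨[], c, a, l₁ ++ l₂, h c (.head l₁), rfl, rfl⟩

def prefixSeq (s : ℕ → V) (n : ℕ) : List V := (List.range n).map s

theorem prefixSeq_succ (s : ℕ → V) (n : ℕ) : prefixSeq s (n + 1) = prefixSeq s n ++ [s n] := by
  simp [prefixSeq, List.range_succ]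

theorem prefixSeq_add (s : ℕ → V) (m n : ℕ) :
    prefixSeq s (m + n) = prefixSeq s m ++ prefixSeq (fun k => s (m + k)) n := by
  simp [prefixSeq, List.range_add]

theorem prefixSeq_eq_prefixSeq_iff {s t : ℕ → V} {n : ℕ} :
    prefixSeq s n = prefixSeq t n ↔ ∀ i < n, s i = t i := by
  simp [prefixSeq, List.map_inj_left]

def consSeq (a : V) (s : ℕ → V) : ℕ → V
  | 0 => a
  | k + 1 => s k

theorem prefixSeq_consSeq (a : V) (s : ℕ → V) (n : ℕ) :
    prefixSeq (consSeq a s) (n + 1) = a :: prefixSeq s n := by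
  simp [prefixSeq, List.range_succ_eq_map, consSeq]

def deleteAt (j : ℕ) (s : ℕ → V) : ℕ → V :=
  fun k => if k < j then s k else s (k + 1)

theorem InfSwapStep.consSeq {s t : ℕ → V} (a : V) (h : InfSwapStep ends s t) :
    InfSwapStep ends (consSeq a s) (consSeq a t) := by
  obtain ⟨i, hadj, rfl⟩ := h
  refine ⟨i + 1, hadj, funext fun j => ?_⟩
  rcases j with _ | j
  · rfl
  · simp [SinkPopping.consSeq]

theorem InfSwapStep.eventually_swapStep_prefixSeq {s t : ℕ → V} (h : InfSwapStep ends s t) :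
    ∃ N, ∀ n ≥ N, SwapStep ends (prefixSeq s n) (prefixSeq t n) ∧ t n = s n := by
  obtain ⟨i, hadj, rfl⟩ := h
  set t : ℕ → V := fun j => if j = i then s (i + 1) else if j = i + 1 then s i else s j
  have ht : ∀ j, j ≠ i → j ≠ i + 1 → t j = s j := fun j h₁ h₂ => by simp [t, h₁, h₂]
  refine ⟨i + 2, fun n hn => ⟨?_, ht n (by omega) (by omega)⟩⟩
  obtain ⟨M, rfl⟩ := Nat.exists_eq_add_of_le hn
  have hsplit (u : ℕ → V) : prefixSeq u (i + 2 + M) =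
      prefixSeq u i ++ u i :: u (i + 1) :: prefixSeq (fun k => u (i + 2 + k)) M := by
    rw [prefixSeq_add, prefixSeq_add]
    simp [prefixSeq, List.range_succ]
  refine ⟨prefixSeq s i, s i, s (i + 1), prefixSeq (fun k => s (i + 2 + k)) M, hadj, hsplit s, ?_⟩
  rw [hsplit t, (prefixSeq_eq_prefixSeq_iff (n := i)).2 fun k hk => ht k (by omega) (by omega),
    (prefixSeq_eq_prefixSeq_iff (n := M)).2 fun k _ => ht (i + 2 + k) (by omega) (by omega)]
  simp [t]

theorem reflTransGen_infSwapStep_consSeq_deleteAt (j : ℕ) (s : ℕ → V)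
    (h : ∀ i < j, ¬ Adj ends (s i) (s j)) :
    Relation.ReflTransGen (InfSwapStep ends) s (consSeq (s j) (deleteAt j s)) := by
  induction j generalizing s with
  | zero =>
    convert Relation.ReflTransGen.refl using 1
    funext k
    rcases k with _ | k <;> rfl
  | succ j ih =>
    set s₁ : ℕ → V := fun k => if k = j then s (j + 1) else if k = j + 1 then s j else s k
    have hstep : InfSwapStep ends s s₁ := ⟨j, h j j.lt_succ_self, rfl⟩
    have hrest := ih s₁ fun i hi => by
      simpa [s₁, hi.ne, (hi.trans j.lt_succ_self).ne] using h i (by omega)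
    convert Relation.ReflTransGen.head hstep hrest using 1
    funext k
    rcases k with _ | k
    · simp [SinkPopping.consSeq, s₁]
    · simp only [SinkPopping.consSeq, deleteAt, s₁]
      split_ifs <;> first | rfl | omega | (congr 1; omega)

/-- `v` if it is a sink of `o`, and otherwise some sink of `o` (junk if there is none). -/
noncomputable def preferSink (ends : E → Sym2 V) (o : Orientation ends) (v : V) : V :=
  haveI : Nonempty V := ⟨v⟩
  Classical.epsilon fun w => IsSink ends o w ∧ (IsSink ends o v → w = v)

theorem preferSink_spec {o : Orientation ends} (h : ∃ w, IsSink ends o w) (v : V) :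
    IsSink ends o (preferSink ends o v) ∧ (IsSink ends o v → preferSink ends o v = v) := by
  refine Classical.epsilon_spec (p := fun w => IsSink ends o w ∧ (IsSink ends o v → w = v)) ?_
  by_cases hv : IsSink ends o v
  · exact ⟨v, hv, fun _ => rfl⟩
  · obtain ⟨w, hw⟩ := h
    exact ⟨w, hw, fun h => absurd h hv⟩

end

section

omit [Fintype V] [Fintype E] [DecidableEq E]

variable {ends : E → Sym2 V} {ω : PopSpace ends}

/-- The stacks left after the pops of `l`. -/
def shifted (ends : E → Sym2 V) (ω : PopSpace ends) (l : List V) : PopSpace ends :=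
  fun e k => ω e (k + l.countP (fun v => decide (v ∈ ends e)))

theorem orientAfter_shifted (l m : List V) :
    orientAfter ends (shifted ends ω l) m = orientAfter ends ω (l ++ m) := by
  funext e
  simp only [orientAfter, shifted, List.countP_append, Nat.add_comm]

theorem shifted_shifted (l m : List V) :
    shifted ends (shifted ends ω l) m = shifted ends ω (l ++ m) := by
  funext e k
  simp only [shifted, List.countP_append, Nat.add_assoc, Nat.add_comm (List.countP _ m)]

theorem orientAfter_perm {l m : List V} (h : l.Perm m) :
    orientAfter ends ω l = orientAfter ends ω m := by
  funext e
  simp only [orientAfter, h.countP_eq]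

theorem shifted_perm {l m : List V} (h : l.Perm m) : shifted ends ω l = shifted ends ω m := by
  funext e k
  simp only [shifted, h.countP_eq]

theorem orientAfter_append_singleton_of_not_mem {l : List V} {w : V} {e : E}
    (hw : w ∉ ends e) : orientAfter ends ω (l ++ [w]) e = orientAfter ends ω l e := by
  simp [orientAfter, List.countP_append, hw]

/-- Popping `w` only advances the stacks under the edges at `w`. -/
theorem isSink_orientAfter_append_singleton_iff {l : List V} {v w : V} (hne : w ≠ v)
    (hwv : ¬ Adj ends w v) :
    IsSink ends (orientAfter ends ω (l ++ [w])) v ↔ IsSink ends (orientAfter ends ω l) v := by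
  have hagree : ∀ e, v ∈ ends e → orientAfter ends ω (l ++ [w]) e = orientAfter ends ω l e :=
    fun e hv => orientAfter_append_singleton_of_not_mem fun hw =>
      hwv ⟨e, ((Sym2.mem_and_mem_iff hne).1 ⟨hw, hv⟩)⟩
  exact ⟨fun h => h.congr fun e hv => (hagree e hv).symm, fun h => h.congr hagree⟩

theorem IsSink.orientAfter_append_singleton {l : List V} {v w : V}
    (hv : IsSink ends (orientAfter ends ω l) v) (hw : IsSink ends (orientAfter ends ω l) w)
    (hne : w ≠ v) : IsSink ends (orientAfter ends ω (l ++ [w])) v :=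
  (isSink_orientAfter_append_singleton_iff hne (hw.not_adj hv)).2 hv

theorem isLegal_nil : IsLegal ends ω [] := nofun

theorem isLegal_cons {a : V} {l : List V} :
    IsLegal ends ω (a :: l) ↔
      IsSink ends (orientAfter ends ω []) a ∧ IsLegal ends (shifted ends ω [a]) l := by
  simp only [IsLegal, List.length_cons, Nat.forall_lt_succ_left', orientAfter_shifted]
  rfl

theorem isLegal_append {l m : List V} :
    IsLegal ends ω (l ++ m) ↔ IsLegal ends ω l ∧ IsLegal ends (shifted ends ω l) m := by
  induction l generalizing ω with
  | nil => exact ⟨fun h => ⟨isLegal_nil, h⟩, And.right⟩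
  | cons a l ih =>
    rw [List.cons_append, isLegal_cons, isLegal_cons, ih, shifted_shifted, and_assoc]
    rfl

theorem isLegal_append_singleton {l : List V} {v : V} :
    IsLegal ends ω (l ++ [v]) ↔ IsLegal ends ω l ∧ IsSink ends (orientAfter ends ω l) v := by
  simp [isLegal_append, isLegal_cons, isLegal_nil, orientAfter_shifted]

theorem isMaximal_iff {l : List V} :
    IsMaximal ends ω l ↔ IsLegal ends ω l ∧ IsSFO ends (orientAfter ends ω l) := by
  simp only [IsMaximal, IsSFO, isLegal_append_singleton]
  tauto

theorem isLegal_pair_iff {a b : V} :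
    IsLegal ends ω [a, b] ↔
      IsSink ends (orientAfter ends ω []) a ∧ IsSink ends (orientAfter ends ω [a]) b := by
  simp [isLegal_cons, isLegal_nil, orientAfter_shifted]

theorem isLegal_pair_swap {a b : V} (hab : ¬ Adj ends a b) (h : IsLegal ends ω [a, b]) :
    IsLegal ends ω [b, a] := by
  rcases eq_or_ne a b with rfl | hne
  · exact h
  have hb := isSink_orientAfter_append_singleton_iff (ω := ω) (l := []) hne hab
  have ha := isSink_orientAfter_append_singleton_iff (ω := ω) (l := []) hne.symm (hab ∘ .symm)
  rw [List.nil_append] at ha hb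
  rw [isLegal_pair_iff] at h ⊢
  exact ⟨hb.1 h.2, ha.2 h.1⟩

theorem SwapStep.isLegal {l l' : List V} (h : SwapStep ends l l') (hl : IsLegal ends ω l) :
    IsLegal ends ω l' := by
  obtain ⟨l₁, a, b, l₂, hab, rfl, rfl⟩ := h
  have hsplit (x y : V) : l₁ ++ x :: y :: l₂ = l₁ ++ [x, y] ++ l₂ := by simp
  rw [hsplit, isLegal_append, isLegal_append] at hl ⊢
  rw [shifted_perm ((List.Perm.swap a b []).append_left l₁)]
  exact ⟨⟨hl.1.1, isLegal_pair_swap hab hl.1.2⟩, hl.2⟩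

theorem ListEqv.isMaximal {l l' : List V} (h : ListEqv ends l l') (hl : IsMaximal ends ω l) :
    IsMaximal ends ω l' := by
  rw [isMaximal_iff, ← orientAfter_perm h.perm] at *
  refine ⟨?_, hl.2⟩
  induction h with
  | refl => exact hl.1
  | tail _ hstep ih => exact hstep.isLegal ih

theorem IsLegal.isSink_and_not_adj_of_not_mem {l : List V} {v : V} (hl : IsLegal ends ω l)
    (hv : IsSink ends (orientAfter ends ω []) v) (hvl : v ∉ l) :
    IsSink ends (orientAfter ends ω l) v ∧ ∀ w ∈ l, ¬ Adj ends w v := by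
  induction l using List.reverseRecOn with
  | nil => exact ⟨hv, nofun⟩
  | append_singleton l w ih =>
    rw [isLegal_append_singleton] at hl
    have hwv : w ≠ v := fun h => hvl (h ▸ List.mem_append_right l (.head []))
    obtain ⟨hvl', hadj⟩ := ih hl.1 fun h => hvl (List.mem_append_left _ h)
    refine ⟨hvl'.orientAfter_append_singleton hl.2 hwv, fun u hu => ?_⟩
    rcases List.mem_append.1 hu with hu | hu
    · exact hadj u hu
    · exact List.eq_of_mem_singleton hu ▸ hl.2.not_adj hvl'

theorem isMaximal_cons {a : V} {l : List V} (h : IsMaximal ends ω (a :: l)) :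
    IsMaximal ends (shifted ends ω [a]) l := by
  rw [isMaximal_iff, isLegal_cons] at h
  rw [isMaximal_iff, orientAfter_shifted]
  exact ⟨h.1.2, h.2⟩

/-- Every legal sequence can be rearranged into an initial segment of a maximal one: its
first entry `a` must be popped in the maximal sequence, and until then `a` stays a sink, so
it commutes to the front. -/
theorem IsMaximal.exists_listEqv_append {l m : List V} (hl : IsMaximal ends ω l)
    (hm : IsLegal ends ω m) : ∃ r, ListEqv ends l (m ++ r) := by
  induction m generalizing ω l with
  | nil => exact ⟨l, .refl⟩
  | cons a m ih =>
    rw [isLegal_cons] at hm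
    have hlegal := (isMaximal_iff.1 hl).1
    have hal : a ∈ l := by
      by_contra hal
      exact (isMaximal_iff.1 hl).2 a (hlegal.isSink_and_not_adj_of_not_mem hm.1 hal).1
    obtain ⟨l₁, l₂, rfl, hal₁⟩ := List.eq_append_cons_of_mem hal
    have hfront : ListEqv ends (l₁ ++ a :: l₂) (a :: (l₁ ++ l₂)) :=
      listEqv_append_cons_cons_append l₂
        ((isLegal_append.1 hlegal).1.isSink_and_not_adj_of_not_mem hm.1 hal₁).2
    obtain ⟨r, hr⟩ := ih (isMaximal_cons (hfront.isMaximal hl)) hm.2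
    exact ⟨r, hfront.trans (hr.cons a)⟩

theorem IsMaximal.listEqv {l q : List V} (hl : IsMaximal ends ω l) (hq : IsMaximal ends ω q) :
    ListEqv ends l q := by
  obtain ⟨_ | ⟨v, r⟩, hr⟩ := hl.exists_listEqv_append (isMaximal_iff.1 hq).1
  · simpa using hr
  · have hqv := (isMaximal_iff.1 (hr.isMaximal hl)).1
    rw [← List.singleton_append, ← List.append_assoc, isLegal_append,
      isLegal_append_singleton] at hqv
    exact absurd hqv.1.2 ((isMaximal_iff.1 hq).2 v)

theorem isLegalInf_iff {s : ℕ → V} :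
    IsLegalInf ends ω s ↔ ∀ n, IsLegal ends ω (prefixSeq s n) := by
  refine ⟨fun h n => ?_, fun h n =>
    (isLegal_append_singleton.1 (prefixSeq_succ s n ▸ h (n + 1))).2⟩
  induction n with
  | zero => exact isLegal_nil
  | succ n ih => exact prefixSeq_succ s n ▸ isLegal_append_singleton.2 ⟨ih, h n⟩

theorem IsLegalInf.of_consSeq {a : V} {s : ℕ → V} (h : IsLegalInf ends ω (consSeq a s)) :
    IsLegalInf ends (shifted ends ω [a]) s :=
  isLegalInf_iff.2 fun n =>
    (isLegal_cons.1 (prefixSeq_consSeq a s n ▸ isLegalInf_iff.1 h (n + 1))).2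

theorem IsMaximal.not_isLegalInf {l : List V} {s : ℕ → V} (hl : IsMaximal ends ω l) :
    ¬ IsLegalInf ends ω s := fun hs => by
  obtain ⟨r, hr⟩ := hl.exists_listEqv_append (isLegalInf_iff.1 hs (l.length + 1))
  have := hr.perm.length_eq
  simp only [prefixSeq, List.length_append, List.length_map, List.length_range] at this
  omega

theorem InfSwapStep.isLegalInf {s t : ℕ → V} (h : InfSwapStep ends s t)
    (hs : IsLegalInf ends ω s) : IsLegalInf ends ω t := by
  obtain ⟨N, hN⟩ := h.eventually_swapStep_prefixSeq
  refine isLegalInf_iff.2 fun n => ?_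
  have := (hN (n + N) (by omega)).1.isLegal (isLegalInf_iff.1 hs (n + N))
  rw [prefixSeq_add] at this
  exact (isLegal_append.1 this).1

theorem IsLegalInf.of_reflTransGen {s t : ℕ → V}
    (h : Relation.ReflTransGen (InfSwapStep ends) s t) (hs : IsLegalInf ends ω s) :
    IsLegalInf ends ω t := by
  induction h with
  | refl => exact hs
  | tail _ hstep ih => exact hstep.isLegalInf ih

theorem InfEqv.isLegalInf {s u : ℕ → V} (h : InfEqv ends s u) (hs : IsLegalInf ends ω s) :
    IsLegalInf ends ω u :=
  isLegalInf_iff.2 fun n => by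
    obtain ⟨t, hst, htu⟩ := h n
    rw [← prefixSeq_eq_prefixSeq_iff.2 htu]
    exact isLegalInf_iff.1 (hs.of_reflTransGen hst) n

theorem IsLegalInf.isSink_of_forall_ne {s : ℕ → V} {v : V} {k : ℕ} (hs : IsLegalInf ends ω s)
    (hv : IsSink ends (orientAfter ends ω (prefixSeq s k)) v) (hne : ∀ n ≥ k, s n ≠ v) :
    ∀ n ≥ k, IsSink ends (orientAfter ends ω (prefixSeq s n)) v := by
  intro n hn
  induction n, hn using Nat.le_induction with
  | base => exact hv
  | succ n hkn ih => exact prefixSeq_succ s n ▸ ih.orientAfter_append_singleton (hs n) (hne n hkn)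

/-- Being a condition on tails only, weak fairness is invariant under transpositions. -/
def Fair (ends : E → Sym2 V) (ω : PopSpace ends) (s : ℕ → V) : Prop :=
  ∀ v k, (∀ n ≥ k, IsSink ends (orientAfter ends ω (prefixSeq s n)) v) → ∃ n ≥ k, s n = v

theorem Fair.exists_ge_eq {s : ℕ → V} {v : V} {k : ℕ} (hf : Fair ends ω s)
    (hs : IsLegalInf ends ω s) (hv : IsSink ends (orientAfter ends ω (prefixSeq s k)) v) :
    ∃ n ≥ k, s n = v := by
  by_contra! hne
  obtain ⟨n, hn, hsn⟩ := hf v k (hs.isSink_of_forall_ne hv hne)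
  exact hne n hn hsn

theorem InfSwapStep.fair {s t : ℕ → V} (h : InfSwapStep ends s t) (hs : Fair ends ω s) :
    Fair ends ω t := by
  obtain ⟨N, hN⟩ := h.eventually_swapStep_prefixSeq
  intro v k hv
  obtain ⟨n, hn, hsn⟩ := hs v (max k N) fun n hn =>
    orientAfter_perm (hN n (le_of_max_le_right hn)).1.perm ▸ hv n (le_of_max_le_left hn)
  exact ⟨n, le_of_max_le_left hn, (hN n (le_of_max_le_right hn)).2.trans hsn⟩

theorem Fair.of_reflTransGen {s t : ℕ → V} (h : Relation.ReflTransGen (InfSwapStep ends) s t)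
    (hs : Fair ends ω s) : Fair ends ω t := by
  induction h with
  | refl => exact hs
  | tail _ hstep ih => exact hstep.fair ih

theorem Fair.of_consSeq {a : V} {s : ℕ → V} (h : Fair ends ω (consSeq a s)) :
    Fair ends (shifted ends ω [a]) s := by
  intro v k hv
  obtain ⟨n, hn, hsn⟩ := h v (k + 1) fun n hn => by
    obtain ⟨m, rfl⟩ : ∃ m, n = m + 1 := ⟨n - 1, by omega⟩
    rw [prefixSeq_consSeq, ← List.singleton_append, ← orientAfter_shifted]
    exact hv m (by omega)
  obtain ⟨m, rfl⟩ : ∃ m, n = m + 1 := ⟨n - 1, by omega⟩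
  exact ⟨m, by omega, hsn⟩

/-- The first entry `a` of `m` is a sink, so by fairness `p` pops it; until then `a` stays a
sink, so its first occurrence commutes to the front. -/
theorem Fair.exists_reflTransGen_prefixSeq_eq {p : ℕ → V} {m : List V} (hf : Fair ends ω p)
    (hp : IsLegalInf ends ω p) (hm : IsLegal ends ω m) :
    ∃ t, Relation.ReflTransGen (InfSwapStep ends) p t ∧ prefixSeq t m.length = m := by
  classical
  induction m generalizing ω p with
  | nil => exact ⟨p, .refl, rfl⟩
  | cons a m ih =>
    rw [isLegal_cons] at hm
    have hex : ∃ j, p j = a := let ⟨j, _, hj⟩ := hf.exists_ge_eq hp (k := 0) hm.1; ⟨j, hj⟩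
    set j := Nat.find hex
    have hpj : p j = a := Nat.find_spec hex
    have hnot : a ∉ prefixSeq p j := by
      simp only [prefixSeq, List.mem_map, List.mem_range, not_exists, not_and]
      exact fun i hi => Nat.find_min hex hi
    have hadj : ∀ i < j, ¬ Adj ends (p i) (p j) := fun i hi =>
      hpj ▸ ((isLegalInf_iff.1 hp j).isSink_and_not_adj_of_not_mem hm.1 hnot).2 (p i)
        (List.mem_map_of_mem (List.mem_range.2 hi))
    have hfront := reflTransGen_infSwapStep_consSeq_deleteAt j p hadj
    rw [hpj] at hfront
    obtain ⟨t, ht, hpre⟩ :=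
      ih (hf.of_reflTransGen hfront).of_consSeq (hp.of_reflTransGen hfront).of_consSeq hm.2
    refine ⟨consSeq a t, hfront.trans (ht.lift _ fun _ _ h => h.consSeq a), ?_⟩
    rw [List.length_cons, prefixSeq_consSeq, hpre]

theorem Fair.infEqv {s u : ℕ → V} (hf : Fair ends ω s) (hs : IsLegalInf ends ω s)
    (hu : IsLegalInf ends ω u) : InfEqv ends s u := fun n => by
  obtain ⟨t, hst, ht⟩ := hf.exists_reflTransGen_prefixSeq_eq hs (isLegalInf_iff.1 hu n)
  simp only [prefixSeq, List.length_map, List.length_range] at ht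
  exact ⟨t, hst, prefixSeq_eq_prefixSeq_iff.1 ht⟩

noncomputable def greedyPops (ends : E → Sym2 V) (ω : PopSpace ends) (σ : ℕ → V) :
    ℕ → List V
  | 0 => []
  | n + 1 =>
    greedyPops ends ω σ n ++ [preferSink ends (orientAfter ends ω (greedyPops ends ω σ n)) (σ n)]

/-- If `σ` lists every vertex infinitely often, a vertex that stays a sink is eventually given
priority and popped. -/
theorem exists_isLegalInf_fair [Countable V]
    (hsink : ∀ l, IsLegal ends ω l → ∃ v, IsSink ends (orientAfter ends ω l) v) :
    ∃ s, IsLegalInf ends ω s ∧ Fair ends ω s := by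
  obtain ⟨v₀, -⟩ := hsink [] isLegal_nil
  have : Nonempty V := ⟨v₀⟩
  obtain ⟨σ, hσ⟩ := exists_forall_exists_ge_eq V
  let s n := preferSink ends (orientAfter ends ω (greedyPops ends ω σ n)) (σ n)
  have hpre (n : ℕ) : prefixSeq s n = greedyPops ends ω σ n := by
    induction n with
    | zero => rfl
    | succ n ih => rw [prefixSeq_succ, ih]; rfl
  have hlegal : IsLegalInf ends ω s := isLegalInf_iff.2 fun n => by
    induction n with
    | zero => exact isLegal_nil
    | succ n ih =>
      rw [hpre] at ih
      rw [prefixSeq_succ, isLegal_append_singleton, hpre]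
      exact ⟨ih, (preferSink_spec (hsink _ ih) _).1⟩
  refine ⟨s, hlegal, fun v k hv => ?_⟩
  obtain ⟨n, hn, rfl⟩ := hσ v k
  have hsink := hpre n ▸ hv n hn
  exact ⟨n, hn, (preferSink_spec ⟨_, hsink⟩ _).2 hsink⟩

end

theorem maximal_popping_sequences_form_equiv_class_general
    (ends : E → Sym2 V) (ω : PopSpace ends) :
    ∃ p : PopSeq V, IsMaximalSeq ends ω p ∧
      ∀ q : PopSeq V, IsMaximalSeq ends ω q ↔ SeqEqv ends p q := by
  by_cases hfin : ∃ l, IsMaximal ends ω l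
  · obtain ⟨l₀, hl₀⟩ := hfin
    refine ⟨.fin l₀, hl₀, fun q => ?_⟩
    cases q with
    | fin l => exact ⟨hl₀.listEqv, fun h => h.isMaximal hl₀⟩
    | inf u => exact iff_of_false hl₀.not_isLegalInf id
  · have hsink : ∀ l, IsLegal ends ω l → ∃ v, IsSink ends (orientAfter ends ω l) v :=
      fun l hl => by
        by_contra! hsfo
        exact hfin ⟨l, isMaximal_iff.2 ⟨hl, hsfo⟩⟩
    obtain ⟨s, hs, hfair⟩ := exists_isLegalInf_fair hsink
    refine ⟨.inf s, hs, fun q => ?_⟩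
    cases q with
    | fin l => exact iff_of_false (fun hl => hfin ⟨l, hl⟩) id
    | inf u => exact ⟨hfair.infEqv hs, fun h => h.isLegalInf hs⟩

/-- For any fixed stack configuration `ω`, the set of maximal popping
sequences for `ω` is exactly one equivalence class under the relation generated by
transposing consecutive entries that are not neighbors in `G`. -/
theorem maximal_popping_sequences_form_equiv_class
    (ends : E → Sym2 V) (hloop : OneLoopPerVertex ends) (ω : PopSpace ends) :
    ∃ p : PopSeq V, IsMaximalSeq ends ω p ∧
      ∀ q : PopSeq V, IsMaximalSeq ends ω q ↔ SeqEqv ends p q :=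
  maximal_popping_sequences_form_equiv_class_general ends ω

end SinkPopping
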